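/- For three binary random variables X₁, X₂, X₃ with joint distribution P, the 3-mutual information I₃ = H(X₁)+H(X₂)+H(X₃) − H(X₁,X₂) − H(X₁,X₃) − H(X₂,X₃) + H(X₁,X₂,X₃) satisfies I₃ ≥ −1, i.e., I₃ ≥ −min(H(X₁),H(X₂),H(X₃)) ≥ −1. -/

import Mathlib

open Finset Real

/-- Marginal of `p` on the coordinates in `T`, evaluated at (the restriction of)
a full configuration `x`. -/
noncomputable def marg {n : ℕ} {α : Fin n → Type*} [∀ i, Fintype (α i)]
    [∀ i, DecidableEq (α i)] (p : (∀ i, α i) → ℝ) (T : Finset (Fin n))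
    (x : ∀ i, α i) : ℝ :=
  ∑ y : ∀ i, α i, if ∀ i ∈ T, y i = x i then p y else 0

/-- Joint Shannon entropy (logarithm base `b`) of the coordinates in `T`
under the distribution `p`. -/
noncomputable def margEnt {n : ℕ} {α : Fin n → Type*} [∀ i, Fintype (α i)]
    [∀ i, DecidableEq (α i)] (b : ℝ) (p : (∀ i, α i) → ℝ)
    (T : Finset (Fin n)) : ℝ :=
  -∑ x : (∀ i : T, α i),
      (∑ y : ∀ i, α i, if ∀ i : T, y i = x i then p y else 0) *
        Real.logb b (∑ y : ∀ i, α i, if ∀ i : T, y i = x i then p y else 0)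

/-- Multivariate mutual information (co-information) of the coordinates in `S`,
defined by the alternating sum of joint entropies (inclusion–exclusion). -/
noncomputable def Imul {n : ℕ} {α : Fin n → Type*} [∀ i, Fintype (α i)]
    [∀ i, DecidableEq (α i)] (b : ℝ) (p : (∀ i, α i) → ℝ)
    (S : Finset (Fin n)) : ℝ :=
  ∑ T ∈ S.powerset.erase ∅, (-1 : ℝ) ^ (T.card + 1) * margEnt b p T
/-! Adding `H(X₁)` to `I₃` regroups it as
`(H(X₁) + H(X₂) - H(X₁,X₂)) + (H(X₁) + H(X₃) - H(X₁,X₃)) + (H(X₁,X₂,X₃) - H(X₂,X₃))`,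
two mutual informations and a conditional entropy, each nonnegative by subadditivity and
monotonicity of joint entropy; the same holds for `X₂` and `X₃`. A binary variable has entropy at
most `log₂ 2 = 1`. Both subadditivity and the bound by the logarithm of the alphabet size are
instances of Gibbs' inequality, i.e. of `log x ≤ x - 1`. -/

section Gibbs

variable {ι : Type*} [Fintype ι] {b : ℝ} {p w : ι → ℝ}

theorem sum_mul_logb_nonpos (hb : 1 < b) (hp : ∀ i, 0 ≤ p i) (hw : ∀ i, 0 < p i → 0 < w i)
    (hpw : ∑ i, p i * w i ≤ ∑ i, p i) : ∑ i, p i * logb b (w i) ≤ 0 := by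
  have hlog : ∑ i, p i * log (w i) ≤ 0 :=
    calc ∑ i, p i * log (w i) ≤ ∑ i, p i * (w i - 1) := sum_le_sum fun i _ => by
          rcases (hp i).eq_or_lt with h | h
          · simp [← h]
          · exact mul_le_mul_of_nonneg_left (log_le_sub_one_of_pos (hw i h)) h.le
      _ = ∑ i, p i * w i - ∑ i, p i := by simp only [mul_sub, mul_one, sum_sub_distrib]
      _ ≤ 0 := sub_nonpos.2 hpw
  simp only [logb, ← mul_div_assoc, ← sum_div]
  exact div_nonpos_of_nonpos_of_nonneg hlog (log_nonneg hb.le)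

theorem neg_sum_mul_logb_le_logb_card (hb : 1 < b) (hp : ∀ i, 0 ≤ p i) (hsum : ∑ i, p i = 1) :
    -∑ i, p i * logb b (p i) ≤ logb b (Fintype.card ι) := by
  obtain ⟨i₀, -, -⟩ := exists_ne_zero_of_sum_ne_zero (hsum.trans_ne one_ne_zero)
  set N : ℝ := (Fintype.card ι : ℝ)
  have hN : 0 < N := Nat.cast_pos.2 (Fintype.card_pos_iff.2 ⟨i₀⟩)
  have hsplit : ∀ i, p i * logb b ((N * p i)⁻¹) = -(p i * logb b N) - p i * logb b (p i) := by
    intro i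
    rcases eq_or_ne (p i) 0 with h | h
    · simp [h]
    · rw [logb_inv, logb_mul hN.ne' h]; ring
  have hpw : ∑ i, p i * (N * p i)⁻¹ ≤ ∑ i, p i := by
    calc ∑ i, p i * (N * p i)⁻¹ ≤ ∑ _i : ι, N⁻¹ := sum_le_sum fun i _ => by
          rcases eq_or_ne (p i) 0 with h | h
          · simp [h, hN.le]
          · rw [mul_inv, mul_left_comm, mul_inv_cancel₀ h, mul_one]
      _ = ∑ i, p i := by simp [hsum, N, hN.ne']
  have := sum_mul_logb_nonpos hb hp (fun i h => by positivity) hpw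
  simp only [hsplit, sum_sub_distrib, sum_neg_distrib, ← sum_mul, hsum] at this
  linarith

end Gibbs

section Pushforward

variable {ι κ κ' : Type*} [Fintype ι] [DecidableEq κ] [DecidableEq κ'] (p : ι → ℝ) {b : ℝ}

noncomputable def pushforward (f : ι → κ) (k : κ) : ℝ :=
  ∑ i, if f i = k then p i else 0

theorem pushforward_eq_of_fibers {f : ι → κ} {g : ι → κ'} (hfg : ∀ i j, f i = f j ↔ g i = g j)
    (i : ι) : pushforward p f (f i) = pushforward p g (g i) :=
  sum_congr rfl fun j _ => if_congr (hfg j i) rfl rfl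

variable {p}

theorem pushforward_nonneg (hp : ∀ i, 0 ≤ p i) (f : ι → κ) (k : κ) : 0 ≤ pushforward p f k :=
  sum_nonneg fun i _ => by split_ifs <;> simp [hp i]

theorem le_pushforward (hp : ∀ i, 0 ≤ p i) (f : ι → κ) (i : ι) : p i ≤ pushforward p f (f i) := by
  unfold pushforward
  simpa using single_le_sum (f := fun j => if f j = f i then p j else 0)
    (fun j _ => by split_ifs <;> simp [hp j]) (mem_univ i)

theorem pushforward_le_of_fibers (hp : ∀ i, 0 ≤ p i) {f : ι → κ} {g : ι → κ'}
    (hfg : ∀ i j, f i = f j → g i = g j) (i : ι) :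
    pushforward p f (f i) ≤ pushforward p g (g i) :=
  sum_le_sum fun j _ => by
    split_ifs with hf hg
    · rfl
    · exact absurd (hfg j i hf) hg
    · exact hp j
    · rfl

variable (p) [Fintype κ] [Fintype κ']

noncomputable def entropy (b : ℝ) (f : ι → κ) : ℝ :=
  -∑ k, pushforward p f k * logb b (pushforward p f k)

theorem sum_pushforward_mul (f : ι → κ) (h : κ → ℝ) :
    ∑ k, pushforward p f k * h k = ∑ i, p i * h (f i) := by
  simp only [pushforward, sum_mul, ite_mul, zero_mul]
  rw [sum_comm]
  simp

theorem sum_pushforward (f : ι → κ) : ∑ k, pushforward p f k = ∑ i, p i := by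
  simpa using sum_pushforward_mul p f 1

theorem entropy_eq_neg_sum (f : ι → κ) :
    entropy p b f = -∑ i, p i * logb b (pushforward p f (f i)) := by
  rw [entropy, sum_pushforward_mul]

theorem entropy_eq_of_fibers {f : ι → κ} {g : ι → κ'} (hfg : ∀ i j, f i = f j ↔ g i = g j) :
    entropy p b f = entropy p b g := by
  simp only [entropy_eq_neg_sum, pushforward_eq_of_fibers p hfg]

variable {p}

theorem entropy_le_of_fibers (hb : 1 < b) (hp : ∀ i, 0 ≤ p i) {f : ι → κ} {g : ι → κ'}
    (hfg : ∀ i j, f i = f j → g i = g j) : entropy p b g ≤ entropy p b f := by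
  rw [entropy_eq_neg_sum, entropy_eq_neg_sum, neg_le_neg_iff]
  refine sum_le_sum fun i _ => ?_
  rcases (hp i).eq_or_lt with h | h
  · simp [← h]
  · exact mul_le_mul_of_nonneg_left (logb_le_logb_of_le hb (h.trans_le (le_pushforward hp f i))
      (pushforward_le_of_fibers hp hfg i)) h.le

theorem entropy_le_logb_card (hb : 1 < b) (hp : ∀ i, 0 ≤ p i) (hsum : ∑ i, p i = 1)
    (f : ι → κ) : entropy p b f ≤ logb b (Fintype.card κ) :=
  neg_sum_mul_logb_le_logb_card hb (pushforward_nonneg hp f) ((sum_pushforward p f).trans hsum)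

theorem sum_mul_pushforward_pair_weight_le (hp : ∀ i, 0 ≤ p i) (hsum : ∑ i, p i = 1)
    (f : ι → κ) (g : ι → κ') :
    ∑ i, p i * (pushforward p f (f i) * pushforward p g (g i) /
      pushforward p (fun j => (f j, g j)) (f i, g i)) ≤ ∑ i, p i := by
  set fg : ι → κ × κ' := fun i => (f i, g i)
  calc _ = ∑ x : κ × κ', pushforward p fg x *
          (pushforward p f x.1 * pushforward p g x.2 / pushforward p fg x) :=
        (sum_pushforward_mul p fg fun x =>
          pushforward p f x.1 * pushforward p g x.2 / pushforward p fg x).symm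
    _ ≤ ∑ x : κ × κ', pushforward p f x.1 * pushforward p g x.2 := sum_le_sum fun x _ => by
        rcases eq_or_ne (pushforward p fg x) 0 with h | h
        · simpa [h] using mul_nonneg (pushforward_nonneg hp f x.1) (pushforward_nonneg hp g x.2)
        · rw [mul_div_cancel₀ _ h]
    _ = ∑ i, p i := by
        rw [Fintype.sum_prod_type, ← Fintype.sum_mul_sum, sum_pushforward, sum_pushforward, hsum,
          one_mul]

theorem entropy_pair_le (hb : 1 < b) (hp : ∀ i, 0 ≤ p i) (hsum : ∑ i, p i = 1)
    (f : ι → κ) (g : ι → κ') :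
    entropy p b (fun i => (f i, g i)) ≤ entropy p b f + entropy p b g := by
  have hpos : ∀ i, 0 < p i → 0 < pushforward p f (f i) ∧ 0 < pushforward p g (g i) ∧
      0 < pushforward p (fun j => (f j, g j)) (f i, g i) := fun i hi =>
    ⟨hi.trans_le (le_pushforward hp f i), hi.trans_le (le_pushforward hp g i),
      hi.trans_le (le_pushforward hp (fun j => (f j, g j)) i)⟩
  have gibbs := sum_mul_logb_nonpos hb hp
    (fun i hi => by obtain ⟨_, _, _⟩ := hpos i hi; positivity)
    (sum_mul_pushforward_pair_weight_le hp hsum f g)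
  simp only [entropy_eq_neg_sum]
  set qfg := pushforward p (fun j => (f j, g j))
  have hsplit : ∀ i, p i * logb b (pushforward p f (f i) * pushforward p g (g i) / qfg (f i, g i))
      = p i * logb b (pushforward p f (f i)) + p i * logb b (pushforward p g (g i))
        - p i * logb b (qfg (f i, g i)) := by
    intro i
    rcases (hp i).eq_or_lt with h | h
    · simp [← h]
    · obtain ⟨_, _, _⟩ := hpos i h
      rw [logb_div (by positivity) (by positivity), logb_mul (by positivity) (by positivity)]
      ring
  simp only [hsplit, sum_add_distrib, sum_sub_distrib] at gibbs
  linarith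

end Pushforward

section MarginalEntropy

variable {n : ℕ} {α : Fin n → Type*} [∀ i, Fintype (α i)] [∀ i, DecidableEq (α i)]

theorem margEnt_eq_entropy (b : ℝ) (p : (∀ i, α i) → ℝ) (T : Finset (Fin n)) :
    margEnt b p T = entropy p b (T.restrict : (∀ i, α i) → ∀ i : T, α i) := by
  simp only [margEnt, entropy, pushforward, funext_iff, Finset.restrict]

variable {p : (∀ i, α i) → ℝ} {b : ℝ}

theorem margEnt_le_of_subset (hb : 1 < b) (hp : ∀ x, 0 ≤ p x) {T U : Finset (Fin n)}
    (hTU : T ⊆ U) : margEnt b p T ≤ margEnt b p U := by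
  rw [margEnt_eq_entropy, margEnt_eq_entropy]
  exact entropy_le_of_fibers hb hp fun x y h => funext fun i => congrFun h ⟨i, hTU i.2⟩

theorem margEnt_union_le (hb : 1 < b) (hp : ∀ x, 0 ≤ p x) (hsum : ∑ x, p x = 1)
    (T U : Finset (Fin n)) : margEnt b p (T ∪ U) ≤ margEnt b p T + margEnt b p U := by
  rw [margEnt_eq_entropy, margEnt_eq_entropy, margEnt_eq_entropy,
    entropy_eq_of_fibers p (g := fun x => (T.restrict x, U.restrict x))]
  · exact entropy_pair_le hb hp hsum _ _
  · intro x y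
    simp [funext_iff, Prod.ext_iff, or_imp, forall_and]

theorem margEnt_le_logb_card (hb : 1 < b) (hp : ∀ x, 0 ≤ p x) (hsum : ∑ x, p x = 1)
    (T : Finset (Fin n)) : margEnt b p T ≤ logb b (Fintype.card (∀ i : T, α i)) := by
  rw [margEnt_eq_entropy]
  exact entropy_le_logb_card hb hp hsum _

end MarginalEntropy

theorem Imul_univ_fin_three {α : Fin 3 → Type*} [∀ i, Fintype (α i)] [∀ i, DecidableEq (α i)]
    (b : ℝ) (p : (∀ i, α i) → ℝ) :
    Imul b p univ = margEnt b p {0} + margEnt b p {1} + margEnt b p {2}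
      - margEnt b p {0, 1} - margEnt b p {0, 2} - margEnt b p {1, 2} + margEnt b p univ := by
  have hsets : (univ : Finset (Fin 3)).powerset.erase ∅ =
      {{0}, {1}, {2}, {0, 1}, {0, 2}, {1, 2}, univ} := by decide
  rw [Imul, hsets]
  repeat rw [sum_insert (by decide)]
  rw [sum_singleton]
  simp only [card_singleton, card_univ, Fintype.card_fin]
  rw [card_pair (by decide), card_pair (by decide), card_pair (by decide)]
  ring

/-- For three binary random variables, the 3-mutual information satisfies
`I₃ ≥ -min(H(X₁), H(X₂), H(X₃)) ≥ -1` (entropies in bits). -/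
theorem I3_ge_neg_min_entropy_ge_neg_one (p : (∀ _ : Fin 3, Fin 2) → ℝ)
    (hp : ∀ x, 0 ≤ p x) (hsum : ∑ x, p x = 1) :
    -min (margEnt 2 p {0}) (min (margEnt 2 p {1}) (margEnt 2 p {2}))
        ≤ Imul 2 p Finset.univ ∧
    (-1 : ℝ) ≤ -min (margEnt 2 p {0}) (min (margEnt 2 p {1}) (margEnt 2 p {2})) := by
  have hb : (1 : ℝ) < 2 := one_lt_two
  have h01 := margEnt_union_le hb hp hsum {0} {1}
  have h02 := margEnt_union_le hb hp hsum {0} {2}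
  have h12 := margEnt_union_le hb hp hsum {1} {2}
  simp only [singleton_union] at h01 h02 h12
  have m01 := margEnt_le_of_subset hb hp (subset_univ {0, 1})
  have m02 := margEnt_le_of_subset hb hp (subset_univ {0, 2})
  have m12 := margEnt_le_of_subset hb hp (subset_univ {1, 2})
  have hH0 : margEnt 2 p {0} ≤ 1 := by
    simpa [Fintype.card_pi, logb_self_eq_one hb] using margEnt_le_logb_card hb hp hsum {0}
  rw [Imul_univ_fin_three]
  refine ⟨neg_le.2 (le_min ?_ (le_min ?_ ?_)), neg_le_neg ((min_le_left _ _).trans hH0)⟩ <;>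
    linarith
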